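/- For a polarization ξ of type (a₁,…,a_g) on an integral torus, the dual polarization ξ^∨ on the dual torus satisfies: ξ∘ξ^∨ and ξ^∨∘ξ are multiplication by a₁a_g on Λ and Λ' respectively, ξ^∨ has type (a₁, a₁a_g/a_{g−1}, …, a₁a_g/a₂, a_g), and ξ^∨ is principal if and only if ξ is principal. -/

import Mathlib

/-- A real torus with integral structure (integral torus): a pair `Λ, Λ'` of finitely
generated free abelian groups of the same rank together with a nondegenerate pairing
`[·,·] : Λ × Λ' → ℝ`.  The underlying torus is `Hom(Λ, ℝ)/Λ'`. -/
structure IntegralTorus where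
  Λ : Type
  Λ' : Type
  grp : AddCommGroup Λ
  grp' : AddCommGroup Λ'
  fr : Module.Free ℤ Λ
  fr' : Module.Free ℤ Λ'
  fin : Module.Finite ℤ Λ
  fin' : Module.Finite ℤ Λ'
  pair : Λ →ₗ[ℤ] Λ' →ₗ[ℤ] ℝ
  rank_eq : Module.finrank ℤ Λ = Module.finrank ℤ Λ'
  nondeg : ∀ l : Λ, l ≠ 0 → ∃ l', pair l l' ≠ 0
  nondeg' : ∀ l' : Λ', l' ≠ 0 → ∃ l, pair l l' ≠ 0

attribute [instance] IntegralTorus.grp IntegralTorus.grp'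
attribute [instance] IntegralTorus.fr IntegralTorus.fr'
attribute [instance] IntegralTorus.fin IntegralTorus.fin'

/-- A homomorphism of integral tori `(f^#, f_#)`, with `f^# : Λ₂ → Λ₁` and
`f_# : Λ'₁ → Λ'₂`, compatible with the pairings. -/
structure TorusHom (T₁ T₂ : IntegralTorus) where
  sharp : T₂.Λ →ₗ[ℤ] T₁.Λ
  flat : T₁.Λ' →ₗ[ℤ] T₂.Λ'
  compat : ∀ (a : T₂.Λ) (b : T₁.Λ'), T₁.pair (sharp a) b = T₂.pair a (flat b)

/-- Composition of homomorphisms of integral tori. -/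
def TorusHom.comp {T₁ T₂ T₃ : IntegralTorus} (g : TorusHom T₂ T₃) (f : TorusHom T₁ T₂) :
    TorusHom T₁ T₃ where
  sharp := f.sharp.comp g.sharp
  flat := g.flat.comp f.flat
  compat := by
    intro a b
    simp only [LinearMap.comp_apply]
    rw [f.compat, g.compat]

/-- A polarization on an integral torus: a homomorphism `ξ : Λ' → Λ` such that
`(x, y) ↦ [ξ(x), y]` is symmetric and positive definite. -/
def IsPolarization (T : IntegralTorus) (ξ : T.Λ' →ₗ[ℤ] T.Λ) : Prop :=
  (∀ x y : T.Λ', T.pair (ξ x) y = T.pair (ξ y) x) ∧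
    ∀ x : T.Λ', x ≠ 0 → 0 < T.pair (ξ x) x

/-!
In the Smith bases `e, e'` both `ξ` and `ξ^∨` are diagonal, with entries `a i` and
`a 0 * (a n / a i)`; since every `a i` divides `a n`, the products of corresponding entries all
equal `a 0 * a n`, and read backwards the entries of `ξ^∨` form a divisibility chain. A diagonal
map between bases is bijective iff its entries are units, and `a 0 * (a n / a i)` are all units
iff `a n` is, iff all `a i` are.
-/

theorem Fin.dvd_last_of_dvd_succ {α : Type*} [Monoid α] {n : ℕ} {a : Fin (n + 1) → α}
    (hdvd : ∀ i : Fin n, a i.castSucc ∣ a i.succ) (i : Fin (n + 1)) : a i ∣ a (Fin.last n) := by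
  rcases (Fin.le_last i).eq_or_lt with rfl | hlt
  · rfl
  · exact (Fin.liftFun_iff_succ (· ∣ ·)).2 hdvd hlt

theorem Int.ediv_dvd_ediv_left {k m n : ℤ} (hmk : m ∣ k) (hnm : n ∣ m) : k / m ∣ k / n := by
  obtain ⟨s, rfl⟩ := hnm
  obtain ⟨t, rfl⟩ := hmk
  rcases eq_or_ne (n * s) 0 with hns | hns
  · simp [hns]
  · rw [Int.mul_ediv_cancel_left _ hns, mul_assoc,
      Int.mul_ediv_cancel_left _ (left_ne_zero_of_mul hns)]
    exact dvd_mul_left t s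

section DiagonalMaps

variable {ι R M N : Type*} [CommSemiring R] [AddCommMonoid M] [Module R M] [AddCommMonoid N]
  [Module R N] {b : Module.Basis ι R M} {b' : Module.Basis ι R N} {f : M →ₗ[R] N} {c : ι → R}

theorem Module.Basis.repr_map_of_apply_eq_smul (hf : ∀ i, f (b i) = c i • b' i) (x : M) (i : ι) :
    b'.repr (f x) i = c i * b.repr x i := by
  have : (Finsupp.lapply i).comp (b'.repr.toLinearMap.comp f) =
      c i • (Finsupp.lapply i).comp b.repr.toLinearMap := by
    refine b.ext fun j => ?_
    rcases eq_or_ne i j with rfl | hij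
    · simp [hf]
    · simp [hf, hij.symm]
  exact LinearMap.congr_fun this x

theorem Module.Basis.bijective_iff_isUnit_of_apply_eq_smul (hf : ∀ i, f (b i) = c i • b' i) :
    Function.Bijective f ↔ ∀ i, IsUnit (c i) := by
  refine ⟨fun hbij i => ?_, fun hc => ?_⟩
  · obtain ⟨x, hx⟩ := hbij.2 (b' i)
    have := b.repr_map_of_apply_eq_smul hf x i
    rw [hx, b'.repr_self, Finsupp.single_eq_same] at this
    exact .of_mul_eq_one _ this.symm
  · have : f = b.equiv (b'.unitsSMul fun i => (hc i).unit) (Equiv.refl ι) :=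
      b.ext fun i => by simp [hf, Module.Basis.unitsSMul_apply]
    rw [this]
    exact LinearEquiv.bijective _

theorem Module.Basis.apply_apply_eq_smul_of_apply_eq_smul {g : N →ₗ[R] M} {d : ι → R} {k : R}
    (hf : ∀ i, f (b i) = c i • b' i) (hg : ∀ i, g (b' i) = d i • b i) (hcd : ∀ i, c i * d i = k)
    (x : M) : g (f x) = k • x := by
  have : g.comp f = k • LinearMap.id := b.ext fun i => by
    simp only [LinearMap.comp_apply, hf, map_smul, hg, smul_smul, hcd, LinearMap.smul_apply,
      LinearMap.id_apply]
  exact LinearMap.congr_fun this x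

end DiagonalMaps

-- The paper's `a₁ a_g / a_i`; the division is exact when `a` is a divisibility chain.
def dualType {n : ℕ} (a : Fin (n + 1) → ℤ) (i : Fin (n + 1)) : ℤ :=
  a 0 * (a (Fin.last n) / a i)

section DualType

variable {n : ℕ} {a : Fin (n + 1) → ℤ} (hdvd : ∀ i : Fin n, a i.castSucc ∣ a i.succ)
include hdvd

theorem mul_dualType (i : Fin (n + 1)) : a i * dualType a i = a 0 * a (Fin.last n) := by
  rw [dualType, mul_left_comm, Int.mul_ediv_cancel' (Fin.dvd_last_of_dvd_succ hdvd i)]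

theorem dualType_succ_dvd (i : Fin n) : dualType a i.succ ∣ dualType a i.castSucc :=
  mul_dvd_mul_left _ (Int.ediv_dvd_ediv_left (Fin.dvd_last_of_dvd_succ hdvd _) (hdvd i))

theorem isUnit_dualType_iff : (∀ i, IsUnit (dualType a i)) ↔ ∀ i, IsUnit (a i) := by
  refine ⟨fun hd i => ?_, fun ha i => ?_⟩
  · have hlast : IsUnit (a (Fin.last n)) := by
      rw [← Int.mul_ediv_cancel' (Fin.dvd_last_of_dvd_succ hdvd 0)]
      exact hd 0
    exact isUnit_of_dvd_unit (Fin.dvd_last_of_dvd_succ hdvd i) hlast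
  · refine isUnit_of_dvd_unit (Dvd.intro_left (a i) (mul_dualType hdvd i)) ?_
    exact (ha 0).mul (ha _)

end DualType

theorem stmt16_general (T : IntegralTorus) (n : ℕ)
    (e : Module.Basis (Fin (n + 1)) ℤ T.Λ) (e' : Module.Basis (Fin (n + 1)) ℤ T.Λ')
    (ξ : T.Λ' →ₗ[ℤ] T.Λ)
    (a : Fin (n + 1) → ℤ)
    (hdvd : ∀ i : Fin n, a i.castSucc ∣ a i.succ)
    (hsnf : ∀ i, ξ (e' i) = a i • e i)
    (ξd : T.Λ →ₗ[ℤ] T.Λ')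
    (hξd : ∀ i, ξd (e i) = (a 0 * (a (Fin.last n) / a i)) • e' i) :
    (∀ x : T.Λ, ξ (ξd x) = (a 0 * a (Fin.last n)) • x) ∧
    (∀ y : T.Λ', ξd (ξ y) = (a 0 * a (Fin.last n)) • y) ∧
    (∃ (fb : Module.Basis (Fin (n + 1)) ℤ T.Λ) (fb' : Module.Basis (Fin (n + 1)) ℤ T.Λ'),
        (∀ i, ξd (fb i) = (a 0 * (a (Fin.last n) / a i.rev)) • fb' i) ∧
        (∀ i : Fin n,
          (a 0 * (a (Fin.last n) / a i.castSucc.rev)) ∣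
            (a 0 * (a (Fin.last n) / a i.succ.rev)))) ∧
    (Function.Bijective ξd ↔ Function.Bijective ξ) := by
  have hξd' : ∀ i, ξd (e i) = dualType a i • e' i := hξd
  refine ⟨e.apply_apply_eq_smul_of_apply_eq_smul hξd' hsnf
      fun i => (mul_comm _ _).trans (mul_dualType hdvd i),
    e'.apply_apply_eq_smul_of_apply_eq_smul hsnf hξd' (mul_dualType hdvd),
    ⟨e.reindex Fin.revPerm, e'.reindex Fin.revPerm, fun i => by simpa using hξd i.rev,
      fun i => by rw [Fin.rev_castSucc, Fin.rev_succ]; exact dualType_succ_dvd hdvd i.rev⟩,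
    ?_⟩
  rw [e.bijective_iff_isUnit_of_apply_eq_smul hξd', e'.bijective_iff_isUnit_of_apply_eq_smul hsnf]
  exact isUnit_dualType_iff hdvd

/-- For a polarization `ξ` of type `(a₀, …, a_n)` on an integral torus (exhibited by
Smith normal form bases `e, e'` with `ξ(e'ᵢ) = aᵢ • eᵢ` and `aᵢ ∣ aᵢ₊₁`), the dual
polarization `ξ^∨` (defined by `ξ^∨(eᵢ) = (a₀·a_n/aᵢ) • e'ᵢ`) satisfies:
`ξ ∘ ξ^∨` and `ξ^∨ ∘ ξ` are multiplication by `a₀·a_n` on `Λ` and `Λ'` respectively;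
`ξ^∨` has type `(a₀, a₀a_n/a_{n-1}, …, a₀a_n/a₁, a_n)`; and `ξ^∨` is principal if and
only if `ξ` is principal. -/
theorem stmt16 (T : IntegralTorus) (n : ℕ)
    (e : Module.Basis (Fin (n + 1)) ℤ T.Λ) (e' : Module.Basis (Fin (n + 1)) ℤ T.Λ')
    (ξ : T.Λ' →ₗ[ℤ] T.Λ) (hξpol : IsPolarization T ξ)
    (a : Fin (n + 1) → ℤ) (ha : ∀ i, 0 < a i)
    (hdvd : ∀ i : Fin n, a i.castSucc ∣ a i.succ)
    (hsnf : ∀ i, ξ (e' i) = a i • e i)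
    (ξd : T.Λ →ₗ[ℤ] T.Λ')
    (hξd : ∀ i, ξd (e i) = (a 0 * (a (Fin.last n) / a i)) • e' i) :
    (∀ x : T.Λ, ξ (ξd x) = (a 0 * a (Fin.last n)) • x) ∧
    (∀ y : T.Λ', ξd (ξ y) = (a 0 * a (Fin.last n)) • y) ∧
    (∃ (fb : Module.Basis (Fin (n + 1)) ℤ T.Λ) (fb' : Module.Basis (Fin (n + 1)) ℤ T.Λ'),
        (∀ i, ξd (fb i) = (a 0 * (a (Fin.last n) / a i.rev)) • fb' i) ∧
        (∀ i : Fin n,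
          (a 0 * (a (Fin.last n) / a i.castSucc.rev)) ∣
            (a 0 * (a (Fin.last n) / a i.succ.rev)))) ∧
    (Function.Bijective ξd ↔ Function.Bijective ξ) :=
  stmt16_general T n e e' ξ a hdvd hsnf ξd hξd
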